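/- If μ is a tight probabilistic frame on ℝ^N, then the map F from Borel sets of ℝ^N to N×N real matrices defined by F(A) = (N / M₂²(μ)) · (∫_A y_i y_j dμ(y))_{i,j} is a positive operator valued measure: each F(A) is positive semidefinite, F(ℝ^N) is the identity matrix, and F is countably additive in the weak sense on pairwise disjoint Borel sets. -/

import Mathlib

open MeasureTheory Matrix
open scoped RealInnerProductSpace

/-! Polarizing the tight-frame identity gives `∫ ⟪x, y⟫ ⟪x', y⟫ dμ(y) = A ⟪x, x'⟫`, so the second
moment matrix of `μ` is `A • 1` and `M₂²(μ)`, its trace, is `N A`; hence `F(ℝ^N) = 1`. Each `F(s)` is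
a positive multiple of the second moment matrix of `μ` restricted to `s`, which is positive
semidefinite, and countably additive in `s` entry by entry by countable additivity of the integral.
The tight-frame identity also forces a finite second moment: for `x ≠ 0` the integral of `⟪x, y⟫²`
is `A ‖x‖² ≠ 0`, which rules out the junk value of a non-integrable integrand. -/

section TightFrame

variable {E : Type*} [NormedAddCommGroup E] [InnerProductSpace ℝ E]

lemma inner_mul_inner_eq_sq_sub_sq_div_four (x y w : E) :
    ⟪x, w⟫ * ⟪y, w⟫ = (⟪x + y, w⟫ ^ 2 - ⟪x - y, w⟫ ^ 2) / 4 := by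
  rw [inner_add_left, inner_sub_left]
  ring

variable [MeasurableSpace E] {μ : Measure E} {A : ℝ}

lemma integrable_inner_sq_of_tight (hA : A ≠ 0)
    (htight : ∀ x : E, ∫ w, ⟪x, w⟫ ^ 2 ∂μ = A * ‖x‖ ^ 2) (x : E) :
    Integrable (fun w => ⟪x, w⟫ ^ 2) μ := by
  by_cases hx : x = 0
  · simp [hx]
  · exact Integrable.of_integral_ne_zero (by simp [htight, hA, hx])

lemma integrable_inner_mul_inner_of_tight (hA : A ≠ 0)
    (htight : ∀ x : E, ∫ w, ⟪x, w⟫ ^ 2 ∂μ = A * ‖x‖ ^ 2) (x y : E) :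
    Integrable (fun w => ⟪x, w⟫ * ⟪y, w⟫) μ := by
  simp_rw [inner_mul_inner_eq_sq_sub_sq_div_four x y]
  exact ((integrable_inner_sq_of_tight hA htight _).sub
    (integrable_inner_sq_of_tight hA htight _)).div_const 4

lemma integral_inner_mul_inner_of_tight (hA : A ≠ 0)
    (htight : ∀ x : E, ∫ w, ⟪x, w⟫ ^ 2 ∂μ = A * ‖x‖ ^ 2) (x y : E) :
    ∫ w, ⟪x, w⟫ * ⟪y, w⟫ ∂μ = A * ⟪x, y⟫ := by
  simp_rw [inner_mul_inner_eq_sq_sub_sq_div_four x y]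
  rw [integral_div, integral_sub (integrable_inner_sq_of_tight hA htight _)
    (integrable_inner_sq_of_tight hA htight _), htight, htight, norm_add_sq_real,
    norm_sub_sq_real]
  ring

end TightFrame

lemma HasSum.dotProduct_mulVec {X n R : Type*} [Fintype n] [Ring R] [TopologicalSpace R]
    [IsTopologicalRing R] {f : X → Matrix n n R} {a : Matrix n n R} (hf : HasSum f a)
    (x y : n → R) : HasSum (fun k => y ⬝ᵥ f k *ᵥ x) (y ⬝ᵥ a *ᵥ x) :=
  hf.map (AddMonoidHom.mk' (fun M => y ⬝ᵥ M *ᵥ x) fun M N => by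
    rw [add_mulVec, dotProduct_add])
    (continuous_const.dotProduct (continuous_id.matrix_mulVec continuous_const))

section SecondMoment

variable {ι : Type*}

noncomputable def secondMomentMatrix (ν : Measure (EuclideanSpace ℝ ι)) : Matrix ι ι ℝ :=
  of fun i j => ∫ y, y i * y j ∂ν

lemma hasSum_secondMomentMatrix_restrict_iUnion {ν : Measure (EuclideanSpace ℝ ι)}
    (hν : ∀ i j, Integrable (fun y : EuclideanSpace ℝ ι => y i * y j) ν)
    {s : ℕ → Set (EuclideanSpace ℝ ι)} (hs : ∀ n, MeasurableSet (s n))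
    (hd : Pairwise (Function.onFun Disjoint s)) :
    HasSum (fun n => secondMomentMatrix (ν.restrict (s n)))
      (secondMomentMatrix (ν.restrict (⋃ n, s n))) :=
  Pi.hasSum.2 fun i => Pi.hasSum.2 fun j =>
    hasSum_integral_iUnion hs hd (hν i j).integrableOn

variable [Fintype ι]

lemma secondMomentMatrix_eq_smul_one_of_tight [DecidableEq ι] {μ : Measure (EuclideanSpace ℝ ι)}
    {A : ℝ} (hA : A ≠ 0) (htight : ∀ x : EuclideanSpace ℝ ι, ∫ w, ⟪x, w⟫ ^ 2 ∂μ = A * ‖x‖ ^ 2) :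
    secondMomentMatrix μ = A • 1 := by
  ext i j
  simpa [secondMomentMatrix, EuclideanSpace.inner_single_left, Matrix.one_apply, eq_comm] using
    integral_inner_mul_inner_of_tight hA htight (EuclideanSpace.single i 1)
      (EuclideanSpace.single j 1)

variable {ν : Measure (EuclideanSpace ℝ ι)}

lemma integral_norm_sq_eq_trace_secondMomentMatrix
    (hν : ∀ i j, Integrable (fun y : EuclideanSpace ℝ ι => y i * y j) ν) :
    ∫ y, ‖y‖ ^ 2 ∂ν = (secondMomentMatrix ν).trace := by
  simp_rw [EuclideanSpace.norm_sq_eq, Real.norm_eq_abs, sq_abs, sq]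
  rw [integral_finsetSum _ fun i _ => hν i i]
  rfl

lemma dotProduct_secondMomentMatrix_mulVec
    (hν : ∀ i j, Integrable (fun y : EuclideanSpace ℝ ι => y i * y j) ν) (x y : ι → ℝ) :
    y ⬝ᵥ secondMomentMatrix ν *ᵥ x = ∫ w, (y ⬝ᵥ w.ofLp) * (x ⬝ᵥ w.ofLp) ∂ν := by
  have hexpand : ∀ w : EuclideanSpace ℝ ι,
      (y ⬝ᵥ w.ofLp) * (x ⬝ᵥ w.ofLp) = ∑ i, ∑ j, y i * x j * (w i * w j) := fun w => by
    simp only [dotProduct, Finset.sum_mul_sum]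
    exact Finset.sum_congr rfl fun i _ => Finset.sum_congr rfl fun j _ => by ring
  simp_rw [hexpand]
  rw [integral_finsetSum _ fun i _ => integrable_finsetSum _ fun j _ => (hν i j).const_mul _]
  simp only [dotProduct, mulVec, secondMomentMatrix, of_apply, Finset.mul_sum]
  refine Finset.sum_congr rfl fun i _ => ?_
  rw [integral_finsetSum _ fun j _ => (hν i j).const_mul _]
  exact Finset.sum_congr rfl fun j _ => by rw [integral_const_mul]; ring

lemma secondMomentMatrix_posSemidef
    (hν : ∀ i j, Integrable (fun y : EuclideanSpace ℝ ι => y i * y j) ν) :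
    (secondMomentMatrix ν).PosSemidef := by
  refine posSemidef_iff_dotProduct_mulVec.2 ⟨?_, fun x => ?_⟩
  · ext i j
    simp only [secondMomentMatrix, conjTranspose_apply, of_apply, star_trivial, mul_comm]
  · rw [star_trivial, dotProduct_secondMomentMatrix_mulVec hν]
    exact integral_nonneg fun w => mul_self_nonneg _

end SecondMoment

theorem stmt19_general {N : ℕ} (μ : Measure (EuclideanSpace ℝ (Fin N)))
    (A : ℝ) (hA : 0 < A)
    (htight : ∀ x : EuclideanSpace ℝ (Fin N), ∫ y, ⟪x, y⟫ ^ 2 ∂μ = A * ‖x‖ ^ 2)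
    (F : Set (EuclideanSpace ℝ (Fin N)) → Matrix (Fin N) (Fin N) ℝ)
    (hF : ∀ s, F s = ((N : ℝ) / ∫ y, ‖y‖ ^ 2 ∂μ) •
      Matrix.of (fun i j => ∫ y in s, y i * y j ∂μ)) :
    (∀ s : Set (EuclideanSpace ℝ (Fin N)), MeasurableSet s → (F s).PosSemidef) ∧
    (F Set.univ = 1) ∧
    (∀ (s : ℕ → Set (EuclideanSpace ℝ (Fin N))),
      (∀ i, MeasurableSet (s i)) → Pairwise (Function.onFun Disjoint s) →
      ∀ x y : Fin N → ℝ,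
        HasSum (fun i => y ⬝ᵥ (F (s i)).mulVec x)
          (y ⬝ᵥ (F (⋃ i, s i)).mulVec x)) := by
  have hint : ∀ i j, Integrable (fun y : EuclideanSpace ℝ (Fin N) => y i * y j) μ := fun i j => by
    simpa [EuclideanSpace.inner_single_left] using integrable_inner_mul_inner_of_tight hA.ne'
      htight (EuclideanSpace.single i 1) (EuclideanSpace.single j 1)
  have hmoment := secondMomentMatrix_eq_smul_one_of_tight hA.ne' htight
  have hF' : ∀ s, F s = ((N : ℝ) / (N * A)) • secondMomentMatrix (μ.restrict s) := fun s => by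
    rw [hF, integral_norm_sq_eq_trace_secondMomentMatrix hint, hmoment]
    simp [secondMomentMatrix, mul_comm]
  refine ⟨fun s _ => ?_, ?_, fun s hs hd x y => ?_⟩
  · rw [hF']
    exact (secondMomentMatrix_posSemidef fun i j => (hint i j).restrict).smul (by positivity)
  · obtain rfl | hN := N.eq_zero_or_pos
    · exact Subsingleton.elim _ _
    rw [hF', Measure.restrict_univ, hmoment, smul_smul, div_mul_cancel_left₀ (by positivity),
      inv_mul_cancel₀ hA.ne', one_smul]
  · simp_rw [hF']
    exact ((hasSum_secondMomentMatrix_restrict_iUnion hint hs hd).const_smul _).dotProduct_mulVec x y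

theorem stmt19 {N : ℕ} (hN : 0 < N) (μ : Measure (EuclideanSpace ℝ (Fin N)))
    [IsProbabilityMeasure μ]
    (hmom : Integrable (fun y : EuclideanSpace ℝ (Fin N) => ‖y‖ ^ 2) μ)
    (A : ℝ) (hA : 0 < A)
    (htight : ∀ x : EuclideanSpace ℝ (Fin N), ∫ y, ⟪x, y⟫ ^ 2 ∂μ = A * ‖x‖ ^ 2)
    (F : Set (EuclideanSpace ℝ (Fin N)) → Matrix (Fin N) (Fin N) ℝ)
    (hF : ∀ s, F s = ((N : ℝ) / ∫ y, ‖y‖ ^ 2 ∂μ) •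
      Matrix.of (fun i j => ∫ y in s, y i * y j ∂μ)) :
    (∀ s : Set (EuclideanSpace ℝ (Fin N)), MeasurableSet s → (F s).PosSemidef) ∧
    (F Set.univ = 1) ∧
    (∀ (s : ℕ → Set (EuclideanSpace ℝ (Fin N))),
      (∀ i, MeasurableSet (s i)) → Pairwise (Function.onFun Disjoint s) →
      ∀ x y : Fin N → ℝ,
        HasSum (fun i => y ⬝ᵥ (F (s i)).mulVec x)
          (y ⬝ᵥ (F (⋃ i, s i)).mulVec x)) :=
  stmt19_general μ A hA htight F hF
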